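/- arXiv:2605.02768 — 2 statements merged into one kernel-verified Lean document; each statement's English description precedes it below -/
import Mathlib

section
/- For every even integer q ≥ 2 there exists a function H ∈ ℱ_{e,Ω} which is the unique solution in ℱ_{e,Ω} of the fixed point equation H(z,x) = z + z Σ_{d≥1} (1/d!) ∫_{Ω^d} ∏_{i=1}^d [K(x,y_i) H(z,y_i)^{q−1}/(q−1)!] · ∏_{1≤i<j≤d} K(y_i,y_j) dν(y₁)⋯dν(y_d); moreover, for every x ∈ Ω the map z ↦ H(z,x) is analytic on the open disk {z ∈ ℂ : |z| < e⁻²}. -/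
open MeasureTheory Filter

noncomputable section

namespace SYK

attribute [local instance] Classical.propDecidable

/-- The chord crossing sign `K(x,y)`. -/
def K (x y : ℝ × ℝ) : ℝ :=
  if (x.1 < y.1 ∧ y.1 < x.2 ∧ x.2 < y.2) ∨ (y.1 < x.1 ∧ x.1 < y.2 ∧ y.2 < x.2) then -1 else 1

lemma K_symm (x y : ℝ × ℝ) : K x y = K y x := if_congr or_comm rfl rfl

/-- The law of `(min U₁ U₂, max U₁ U₂)` for `U₁, U₂` i.i.d. uniform on `[0,1]`. -/
def nu : Measure (ℝ × ℝ) :=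
  Measure.map (fun p : ℝ × ℝ => (min p.1 p.2, max p.1 p.2))
    (volume.restrict (Set.Icc (0 : ℝ) 1 ×ˢ Set.Icc (0 : ℝ) 1))

/-- `Ω = [0,1]²`. -/
def Omega : Set (ℝ × ℝ) := Set.Icc (0 : ℝ) 1 ×ˢ Set.Icc (0 : ℝ) 1

/-- The closed disk `{z : |z| ≤ e⁻²}`. -/
def De : Set ℂ := Metric.closedBall 0 (Real.exp (-2))

/-- Membership in `ℱ_{e,Ω}`: continuous on the domain and bounded by `1` there. -/
def memF (G : ℂ → ℝ × ℝ → ℂ) : Prop :=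
  ContinuousOn (fun p : ℂ × (ℝ × ℝ) => G p.1 p.2) (De ×ˢ Omega) ∧
    ∀ z ∈ De, ∀ x ∈ Omega, ‖G z x‖ ≤ 1

/-- `∏_{1 ≤ i < j ≤ d} K(y_i, y_j)`. -/
def pairProd (d : ℕ) (y : Fin d → ℝ × ℝ) : ℝ :=
  ∏ p ∈ Finset.univ.filter (fun p : Fin d × Fin d => p.1 < p.2), K (y p.1) (y p.2)

/-- The `d`-th term of the series defining the operator `𝒯`. -/
def Tterm (q : ℕ) (G : ℂ → ℝ × ℝ → ℂ) (z : ℂ) (x : ℝ × ℝ) (d : ℕ) : ℂ :=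
  ((d.factorial : ℂ))⁻¹ *
    ∫ y : Fin d → ℝ × ℝ,
      (∏ i, ((K x (y i) : ℂ) * (G z (y i)) ^ (q - 1) / ((q - 1).factorial : ℂ))) *
        (pairProd d y : ℂ) ∂(Measure.pi fun _ => nu)

/-- The operator `𝒯` (Chord-Cavity operator). -/
def Tcal (q : ℕ) (G : ℂ → ℝ × ℝ → ℂ) (z : ℂ) (x : ℝ × ℝ) : ℂ :=
  z + z * ∑' d : ℕ, Tterm q G z x (d + 1)

/-- `H` is a Chord-Cavity-Generator: it lies in `ℱ_{e,Ω}` and satisfies the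
fixed point equation on the domain. -/
def IsCCG (q : ℕ) (H : ℂ → ℝ × ℝ → ℂ) : Prop :=
  memF H ∧ ∀ z ∈ De, ∀ x ∈ Omega, H z x = Tcal q H z x

/-! ### Basic facts about `K` -/

lemma K_eq_one_or (x y : ℝ × ℝ) : K x y = 1 ∨ K x y = -1 := by
  unfold K; split <;> simp

lemma abs_K (x y : ℝ × ℝ) : |K x y| = 1 := by
  rcases K_eq_one_or x y with h | h <;> rw [h] <;> norm_num

lemma norm_K_complex (x y : ℝ × ℝ) : ‖(K x y : ℂ)‖ = 1 := by
  rw [Complex.norm_real, Real.norm_eq_abs, abs_K]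

lemma measurable_K : Measurable (fun p : (ℝ × ℝ) × (ℝ × ℝ) => K p.1 p.2) := by
  have hopen : IsOpen {p : (ℝ × ℝ) × (ℝ × ℝ) |
      (p.1.1 < p.2.1 ∧ p.2.1 < p.1.2 ∧ p.1.2 < p.2.2) ∨
        (p.2.1 < p.1.1 ∧ p.1.1 < p.2.2 ∧ p.2.2 < p.1.2)} := by
    apply IsOpen.union
    · exact ((isOpen_lt (continuous_fst.fst) (continuous_snd.fst)).inter
        ((isOpen_lt (continuous_snd.fst) (continuous_fst.snd)).inter
          (isOpen_lt (continuous_fst.snd) (continuous_snd.snd))))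
    · exact ((isOpen_lt (continuous_snd.fst) (continuous_fst.fst)).inter
        ((isOpen_lt (continuous_fst.fst) (continuous_snd.snd)).inter
          (isOpen_lt (continuous_snd.snd) (continuous_fst.snd))))
  exact Measurable.ite hopen.measurableSet measurable_const measurable_const

lemma measurable_K_left (x : ℝ × ℝ) : Measurable (K x) :=
  measurable_K.comp (measurable_const.prodMk measurable_id)

/-! ### Basic facts about `nu` -/

lemma measurable_minmax : Measurable fun p : ℝ × ℝ => (min p.1 p.2, max p.1 p.2) :=
  ((continuous_fst.min continuous_snd).prodMk (continuous_fst.max continuous_snd)).measurable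

lemma measurableSet_Omega : MeasurableSet Omega :=
  measurableSet_Icc.prod measurableSet_Icc

instance : IsProbabilityMeasure nu := by
  constructor
  rw [nu, Measure.map_apply measurable_minmax MeasurableSet.univ, Set.preimage_univ,
    Measure.restrict_apply_univ, Measure.volume_eq_prod, Measure.prod_prod, Real.volume_Icc]
  norm_num

lemma nu_compl_Omega : nu Omegaᶜ = 0 := by
  rw [nu, Measure.map_apply measurable_minmax measurableSet_Omega.compl,
    Measure.restrict_apply (measurable_minmax measurableSet_Omega.compl)]
  have hempty : ((fun p : ℝ × ℝ => (min p.1 p.2, max p.1 p.2)) ⁻¹' Omegaᶜ) ∩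
      (Set.Icc (0 : ℝ) 1 ×ˢ Set.Icc (0 : ℝ) 1) = ∅ := by
    ext p
    simp only [Set.mem_inter_iff, Set.mem_preimage, Set.mem_compl_iff, Set.mem_empty_iff_false,
      iff_false, not_and, not_not]
    rintro h ⟨⟨h1, h2⟩, h3, h4⟩
    exact h ⟨⟨le_min h1 h3, min_le_of_left_le h2⟩, ⟨le_max_of_le_left h1, max_le h2 h4⟩⟩
  rw [hempty, measure_empty]

lemma ae_nu_mem_Omega : ∀ᵐ y ∂nu, y ∈ Omega := by
  rw [ae_iff]
  exact nu_compl_Omega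

lemma volume_fst_eq (a : ℝ) : (volume : Measure (ℝ × ℝ)) {p | p.1 = a} = 0 := by
  have : {p : ℝ × ℝ | p.1 = a} = {a} ×ˢ (Set.univ : Set ℝ) := by
    ext p
    simp only [Set.mem_setOf_eq, Set.mem_prod, Set.mem_singleton_iff, Set.mem_univ, and_true]
  rw [this, Measure.volume_eq_prod, Measure.prod_prod, Real.volume_singleton, zero_mul]

lemma volume_snd_eq (a : ℝ) : (volume : Measure (ℝ × ℝ)) {p | p.2 = a} = 0 := by
  have : {p : ℝ × ℝ | p.2 = a} = (Set.univ : Set ℝ) ×ˢ ({a} : Set ℝ) := by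
    ext p
    simp only [Set.mem_setOf_eq, Set.mem_prod, Set.mem_singleton_iff, Set.mem_univ, true_and]
  rw [this, Measure.volume_eq_prod, Measure.prod_prod, Real.volume_singleton, mul_zero]

lemma nu_fst_eq (a : ℝ) : nu {y | y.1 = a} = 0 := by
  have hms : MeasurableSet {y : ℝ × ℝ | y.1 = a} :=
    (isClosed_eq continuous_fst continuous_const).measurableSet
  rw [nu, Measure.map_apply measurable_minmax hms]
  have hsub : ((fun p : ℝ × ℝ => (min p.1 p.2, max p.1 p.2)) ⁻¹' {y | y.1 = a}) ⊆
      {p : ℝ × ℝ | p.1 = a} ∪ {p : ℝ × ℝ | p.2 = a} := by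
    intro p hp
    simp only [Set.mem_preimage, Set.mem_setOf_eq] at hp
    rcases min_cases p.1 p.2 with ⟨h, _⟩ | ⟨h, _⟩
    · exact Or.inl (by rw [Set.mem_setOf_eq, ← h]; exact hp)
    · exact Or.inr (by rw [Set.mem_setOf_eq, ← h]; exact hp)
  have h0 : (volume : Measure (ℝ × ℝ))
      ({p : ℝ × ℝ | p.1 = a} ∪ {p : ℝ × ℝ | p.2 = a}) = 0 :=
    measure_union_null (volume_fst_eq a) (volume_snd_eq a)
  refine le_antisymm ?_ zero_le
  exact (Measure.restrict_apply_le _ _).trans (le_of_eq (measure_mono_null hsub h0))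

lemma nu_snd_eq (a : ℝ) : nu {y | y.2 = a} = 0 := by
  have hms : MeasurableSet {y : ℝ × ℝ | y.2 = a} :=
    (isClosed_eq continuous_snd continuous_const).measurableSet
  rw [nu, Measure.map_apply measurable_minmax hms]
  have hsub : ((fun p : ℝ × ℝ => (min p.1 p.2, max p.1 p.2)) ⁻¹' {y | y.2 = a}) ⊆
      {p : ℝ × ℝ | p.1 = a} ∪ {p : ℝ × ℝ | p.2 = a} := by
    intro p hp
    simp only [Set.mem_preimage, Set.mem_setOf_eq] at hp
    rcases max_cases p.1 p.2 with ⟨h, _⟩ | ⟨h, _⟩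
    · exact Or.inl (by rw [Set.mem_setOf_eq, ← h]; exact hp)
    · exact Or.inr (by rw [Set.mem_setOf_eq, ← h]; exact hp)
  have h0 : (volume : Measure (ℝ × ℝ))
      ({p : ℝ × ℝ | p.1 = a} ∪ {p : ℝ × ℝ | p.2 = a}) = 0 :=
    measure_union_null (volume_fst_eq a) (volume_snd_eq a)
  refine le_antisymm ?_ zero_le
  exact (Measure.restrict_apply_le _ _).trans (le_of_eq (measure_mono_null hsub h0))

lemma ae_nu_fst_ne (a : ℝ) : ∀ᵐ y ∂nu, y.1 ≠ a := by
  rw [ae_iff]; simpa using nu_fst_eq a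

lemma ae_nu_snd_ne (a : ℝ) : ∀ᵐ y ∂nu, y.2 ≠ a := by
  rw [ae_iff]; simpa using nu_snd_eq a

/-! ### Eventual constancy of `K` -/

lemma eventually_cmp_of_ne {a b : ℝ} (h : a ≠ b) :
    ∀ᶠ c in nhds a, ((c < b ↔ a < b) ∧ (b < c ↔ b < a)) := by
  rcases h.lt_or_gt with hab | hab
  · filter_upwards [Iio_mem_nhds hab] with c (hc : c < b)
    exact ⟨iff_of_true hc hab, iff_of_false (asymm hc) (asymm hab)⟩
  · filter_upwards [Ioi_mem_nhds hab] with c (hc : b < c)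
    exact ⟨iff_of_false (asymm hc) (asymm hab), iff_of_true hc hab⟩

lemma eventually_K_eq (x y : ℝ × ℝ) (h1 : y.1 ≠ x.1) (h2 : y.1 ≠ x.2)
    (h3 : y.2 ≠ x.1) (h4 : y.2 ≠ x.2) :
    ∀ᶠ x' in nhds x, K x' y = K x y := by
  have tf : Tendsto (fun p : ℝ × ℝ => p.1) (nhds x) (nhds x.1) := continuous_fst.tendsto x
  have ts : Tendsto (fun p : ℝ × ℝ => p.2) (nhds x) (nhds x.2) := continuous_snd.tendsto x
  have e1 : ∀ᶠ x' : ℝ × ℝ in nhds x, (x'.1 < y.1 ↔ x.1 < y.1) ∧ (y.1 < x'.1 ↔ y.1 < x.1) :=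
    tf.eventually (eventually_cmp_of_ne h1.symm)
  have e2 : ∀ᶠ x' : ℝ × ℝ in nhds x, (x'.2 < y.1 ↔ x.2 < y.1) ∧ (y.1 < x'.2 ↔ y.1 < x.2) :=
    ts.eventually (eventually_cmp_of_ne h2.symm)
  have e3 : ∀ᶠ x' : ℝ × ℝ in nhds x, (x'.1 < y.2 ↔ x.1 < y.2) ∧ (y.2 < x'.1 ↔ y.2 < x.1) :=
    tf.eventually (eventually_cmp_of_ne h3.symm)
  have e4 : ∀ᶠ x' : ℝ × ℝ in nhds x, (x'.2 < y.2 ↔ x.2 < y.2) ∧ (y.2 < x'.2 ↔ y.2 < x.2) :=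
    ts.eventually (eventually_cmp_of_ne h4.symm)
  filter_upwards [e1, e2, e3, e4] with x' ⟨a1, a1'⟩ ⟨a2, a2'⟩ ⟨a3, a3'⟩ ⟨a4, a4'⟩
  unfold K
  exact if_congr (by rw [a1, a2', a4, a1', a3, a4']) rfl rfl

/-! ### Product difference estimate -/

lemma norm_prod_sub_prod_le {ι : Type*} (s : Finset ι) (a b : ι → ℂ) {ε : ℝ}
    (ha : ∀ i ∈ s, ‖a i‖ ≤ 1) (hb : ∀ i ∈ s, ‖b i‖ ≤ 1) (hab : ∀ i ∈ s, ‖a i - b i‖ ≤ ε) :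
    ‖∏ i ∈ s, a i - ∏ i ∈ s, b i‖ ≤ s.card * ε := by
  classical
  induction s using Finset.cons_induction with
  | empty => simp
  | cons j s hj ih =>
    have hε : 0 ≤ ε := le_trans (norm_nonneg _) (hab j (Finset.mem_cons_self j s))
    rw [Finset.prod_cons, Finset.prod_cons]
    have hsplit : a j * ∏ i ∈ s, a i - b j * ∏ i ∈ s, b i =
        a j * (∏ i ∈ s, a i - ∏ i ∈ s, b i) + (a j - b j) * ∏ i ∈ s, b i := by ring
    rw [hsplit]
    have hprodb : ‖∏ i ∈ s, b i‖ ≤ 1 := by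
      rw [norm_prod]
      exact Finset.prod_le_one (fun i _ => norm_nonneg _)
        (fun i hi => hb i (Finset.mem_cons_of_mem hi))
    have ih' := ih (fun i hi => ha i (Finset.mem_cons_of_mem hi))
      (fun i hi => hb i (Finset.mem_cons_of_mem hi))
      (fun i hi => hab i (Finset.mem_cons_of_mem hi))
    calc ‖a j * (∏ i ∈ s, a i - ∏ i ∈ s, b i) + (a j - b j) * ∏ i ∈ s, b i‖
        ≤ ‖a j‖ * ‖∏ i ∈ s, a i - ∏ i ∈ s, b i‖ + ‖a j - b j‖ * ‖∏ i ∈ s, b i‖ := by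
          refine le_trans (norm_add_le _ _) ?_
          rw [norm_mul, norm_mul]
      _ ≤ 1 * (s.card * ε) + ε * 1 := by
          gcongr
          · exact ha j (Finset.mem_cons_self j s)
          · exact hab j (Finset.mem_cons_self j s)
      _ ≤ (s.cons j hj).card * ε := by
          rw [Finset.card_cons]
          push_cast
          nlinarith
  
lemma norm_pow_sub_pow_le' (a b : ℂ) (n : ℕ) (ha : ‖a‖ ≤ 1) (hb : ‖b‖ ≤ 1) :
    ‖a ^ n - b ^ n‖ ≤ n * ‖a - b‖ := by
  have := norm_prod_sub_prod_le (Finset.univ : Finset (Fin n)) (fun _ => a) (fun _ => b)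
    (fun i _ => ha) (fun i _ => hb) (fun i _ => le_rfl)
  simpa using this

/-! ### Series facts -/

lemma summable_invfact : Summable (fun d : ℕ => (1 : ℝ) / d.factorial) := by
  simpa using Real.summable_pow_div_factorial 1

lemma tsum_invfact_eq : (∑' d : ℕ, (1 : ℝ) / d.factorial) = Real.exp 1 := by
  rw [Real.exp_eq_exp_ℝ, NormedSpace.exp_eq_tsum_div]
  simp

lemma tsum_invfact_le : (∑' d : ℕ, (1 : ℝ) / d.factorial) ≤ 3 := by
  rw [tsum_invfact_eq]
  have := Real.exp_one_lt_d9
  linarith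

lemma summable_invfact_succ : Summable (fun d : ℕ => (1 : ℝ) / (d + 1).factorial) :=
  summable_invfact.comp_injective (add_left_injective 1)

lemma tsum_invfact_succ_le : (∑' d : ℕ, (1 : ℝ) / (d + 1).factorial) ≤ 2 := by
  have h := Summable.tsum_eq_zero_add summable_invfact
  simp only [Nat.factorial_zero, Nat.cast_one, div_one] at h
  have h2 : (∑' d : ℕ, (1 : ℝ) / (d + 1).factorial)
      = (∑' d : ℕ, (1 : ℝ) / d.factorial) - 1 := by
    rw [h]; ring
  rw [h2]
  have := tsum_invfact_le
  linarith

lemma three_exp_neg_two_lt_one : 3 * Real.exp (-2) < 1 := by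
  rw [Real.exp_neg]
  rw [mul_inv_lt_iff₀ (Real.exp_pos 2)]
  have h := Real.exp_one_gt_d9
  have : Real.exp 2 = Real.exp 1 * Real.exp 1 := by
    rw [← Real.exp_add]; norm_num
  nlinarith


/-! ### The domain `S` and clamping -/

def Sset : Set (ℂ × (ℝ × ℝ)) := De ×ˢ Omega

lemma isCompact_Omega : IsCompact Omega :=
  (isCompact_Icc).prod (isCompact_Icc)

lemma isCompact_Sset : IsCompact Sset :=
  (isCompact_closedBall _ _).prod isCompact_Omega

instance : CompactSpace Sset := isCompact_iff_compactSpace.mp isCompact_Sset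

def clamp (x : ℝ × ℝ) : ℝ × ℝ := (max 0 (min 1 x.1), max 0 (min 1 x.2))

lemma clamp_mem (x : ℝ × ℝ) : clamp x ∈ Omega := by
  constructor
  · exact ⟨le_max_left _ _, max_le zero_le_one (min_le_left _ _)⟩
  · exact ⟨le_max_left _ _, max_le zero_le_one (min_le_left _ _)⟩

lemma clamp_eq {x : ℝ × ℝ} (hx : x ∈ Omega) : clamp x = x := by
  obtain ⟨⟨h1, h2⟩, h3, h4⟩ := hx
  unfold clamp
  rw [min_eq_right h2, max_eq_right h1, min_eq_right h4, max_eq_right h3]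

lemma clamp_clamp (x : ℝ × ℝ) : clamp (clamp x) = clamp x := clamp_eq (clamp_mem x)

lemma continuous_clamp : Continuous clamp := by
  unfold clamp; fun_prop

/-! ### Extension of a continuous function on `S` -/

def extCM (g : C(Sset, ℂ)) : ℂ → ℝ × ℝ → ℂ := fun z x =>
  if hz : z ∈ De then g ⟨(z, clamp x), Set.mem_prod.mpr ⟨hz, clamp_mem x⟩⟩ else 0

lemma extCM_apply (g : C(Sset, ℂ)) {z : ℂ} (x : ℝ × ℝ) (hz : z ∈ De) :
    extCM g z x = g ⟨(z, clamp x), Set.mem_prod.mpr ⟨hz, clamp_mem x⟩⟩ := dif_pos hz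

lemma extCM_eq_of_mem (g : C(Sset, ℂ)) {z : ℂ} {x : ℝ × ℝ} (hz : z ∈ De) (hx : x ∈ Omega) :
    extCM g z x = g ⟨(z, x), Set.mem_prod.mpr ⟨hz, hx⟩⟩ := by
  rw [extCM_apply g x hz]
  congr 1
  exact Subtype.ext (congrArg (Prod.mk z) (clamp_eq hx))

lemma extCM_clamp (g : C(Sset, ℂ)) (z : ℂ) (x : ℝ × ℝ) :
    extCM g z (clamp x) = extCM g z x := by
  unfold extCM
  split
  · congr 1
    exact Subtype.ext (congrArg (Prod.mk z) (clamp_clamp x))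
  · rfl

lemma norm_extCM_le (g : C(Sset, ℂ)) (z : ℂ) (x : ℝ × ℝ) : ‖extCM g z x‖ ≤ ‖g‖ := by
  unfold extCM
  split
  · exact g.norm_coe_le_norm _
  · simpa using norm_nonneg g

lemma continuous_extCM_snd (g : C(Sset, ℂ)) (z : ℂ) : Continuous (extCM g z) := by
  unfold extCM
  split
  · exact g.continuous.comp (Continuous.subtype_mk
      (continuous_const.prodMk continuous_clamp) _)
  · exact continuous_const

lemma continuousOn_extCM_fst (g : C(Sset, ℂ)) (t : ℝ × ℝ) :
    ContinuousOn (fun z => extCM g z t) De := by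
  rw [continuousOn_iff_continuous_restrict]
  have : Set.restrict De (fun z => extCM g z t) = fun z : De =>
      g ⟨(z.1, clamp t), Set.mem_prod.mpr ⟨z.2, clamp_mem t⟩⟩ := by
    funext z
    exact dif_pos z.2
  rw [show De.domRestrict (fun z => extCM g z t) = _ from this]
  exact g.continuous.comp (Continuous.subtype_mk
    ((continuous_subtype_val).prodMk continuous_const) _)

lemma continuousOn_extCM (g : C(Sset, ℂ)) :
    ContinuousOn (fun p : ℂ × (ℝ × ℝ) => extCM g p.1 p.2) Sset := by
  rw [continuousOn_iff_continuous_restrict]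
  have : Set.restrict Sset (fun p : ℂ × (ℝ × ℝ) => extCM g p.1 p.2) = fun p : Sset =>
      g ⟨(p.1.1, clamp p.1.2), Set.mem_prod.mpr ⟨p.2.1, clamp_mem p.1.2⟩⟩ := by
    funext p
    exact dif_pos p.2.1
  rw [show Sset.domRestrict (fun p : ℂ × (ℝ × ℝ) => extCM g p.1 p.2) = _ from this]
  exact g.continuous.comp (Continuous.subtype_mk
    ((continuous_subtype_val.fst).prodMk (continuous_clamp.comp continuous_subtype_val.snd)) _)

/-! ### The product measure and the integrand -/

abbrev μpi (d : ℕ) : Measure (Fin d → ℝ × ℝ) := Measure.pi fun _ => nu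

lemma ae_eval_nu {d : ℕ} (i : Fin d) {p : ℝ × ℝ → Prop} (hp : ∀ᵐ t ∂nu, p t) :
    ∀ᵐ y ∂(μpi d), p (y i) :=
  Measure.tendsto_eval_ae_ae.eventually hp

def integrand (q : ℕ) (G : ℂ → ℝ × ℝ → ℂ) (d : ℕ) (z : ℂ) (x : ℝ × ℝ)
    (y : Fin d → ℝ × ℝ) : ℂ :=
  (∏ i, ((K x (y i) : ℂ) * (G z (y i)) ^ (q - 1) / ((q - 1).factorial : ℂ))) *
    (pairProd d y : ℂ)

lemma Tterm_eq_integral (q : ℕ) (G : ℂ → ℝ × ℝ → ℂ) (z : ℂ) (x : ℝ × ℝ) (d : ℕ) :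
    Tterm q G z x d = ((d.factorial : ℂ))⁻¹ * ∫ y, integrand q G d z x y ∂(μpi d) := rfl

lemma norm_pairProd (d : ℕ) (y : Fin d → ℝ × ℝ) : ‖(pairProd d y : ℂ)‖ = 1 := by
  rw [Complex.norm_real, Real.norm_eq_abs, pairProd, Finset.abs_prod]
  exact Finset.prod_eq_one fun p _ => abs_K _ _

lemma measurable_pairProd (d : ℕ) : Measurable (fun y : Fin d → ℝ × ℝ => pairProd d y) := by
  apply Finset.measurable_prod
  intro p _
  have : (fun y : Fin d → ℝ × ℝ => K (y p.1) (y p.2)) =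
      (fun q : (ℝ × ℝ) × (ℝ × ℝ) => K q.1 q.2) ∘ (fun y => (y p.1, y p.2)) := rfl
  rw [this]
  exact measurable_K.comp ((measurable_pi_apply p.1).prodMk (measurable_pi_apply p.2))

/-- The basic factor bound.  Here `‖a‖ ≤ 1`. -/
lemma norm_factor_le (q : ℕ) (k : ℝ) (hk : |k| = 1) (a : ℂ) (ha : ‖a‖ ≤ 1) :
    ‖(k : ℂ) * a ^ (q - 1) / ((q - 1).factorial : ℂ)‖ ≤ 1 := by
  rw [norm_div, norm_mul, Complex.norm_real, Real.norm_eq_abs, hk, one_mul, norm_pow,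
    Complex.norm_natCast]
  have h1 : ‖a‖ ^ (q - 1) ≤ 1 := pow_le_one₀ (norm_nonneg a) ha
  have h2 : (1 : ℝ) ≤ ((q - 1).factorial : ℝ) := by
    exact_mod_cast Nat.one_le_iff_ne_zero.mpr (Nat.factorial_ne_zero _)
  rw [div_le_one (by positivity)]
  linarith

/-- The factor difference bound. -/
lemma norm_factor_sub_le (q : ℕ) (k : ℝ) (hk : |k| = 1) (a b : ℂ) (ha : ‖a‖ ≤ 1)
    (hb : ‖b‖ ≤ 1) {ε : ℝ} (hab : ‖a - b‖ ≤ ε) :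
    ‖(k : ℂ) * a ^ (q - 1) / ((q - 1).factorial : ℂ) -
      (k : ℂ) * b ^ (q - 1) / ((q - 1).factorial : ℂ)‖ ≤ ε := by
  have hfac : (0 : ℝ) < ((q - 1).factorial : ℝ) := by exact_mod_cast (q - 1).factorial_pos
  have : (k : ℂ) * a ^ (q - 1) / ((q - 1).factorial : ℂ) -
      (k : ℂ) * b ^ (q - 1) / ((q - 1).factorial : ℂ) =
      (k : ℂ) * (a ^ (q - 1) - b ^ (q - 1)) / ((q - 1).factorial : ℂ) := by ring
  rw [this, norm_div, norm_mul, Complex.norm_real, Real.norm_eq_abs, hk, one_mul,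
    Complex.norm_natCast]
  have h1 : ‖a ^ (q - 1) - b ^ (q - 1)‖ ≤ ((q - 1 : ℕ) : ℝ) * ‖a - b‖ :=
    norm_pow_sub_pow_le' a b (q - 1) ha hb
  have h2 : ((q - 1 : ℕ) : ℝ) ≤ ((q - 1).factorial : ℝ) := by
    exact_mod_cast Nat.self_le_factorial _
  have h3 : ‖a - b‖ ≤ ε := hab
  have h4 : (0 : ℝ) ≤ ‖a - b‖ := norm_nonneg _
  rw [div_le_iff₀ hfac]
  nlinarith [norm_nonneg (a ^ (q - 1) - b ^ (q - 1))]

/-! ### Measurability and bounds for the integrand -/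

lemma aesm_integrand (q : ℕ) (g : C(Sset, ℂ)) (d : ℕ) (z : ℂ) (x : ℝ × ℝ) :
    AEStronglyMeasurable (integrand q (extCM g) d z x) (μpi d) := by
  apply Measurable.aestronglyMeasurable
  apply Measurable.mul
  · apply Finset.measurable_prod
    intro i _
    apply Measurable.div_const
    apply Measurable.mul
    · have : (fun y : Fin d → ℝ × ℝ => ((K x (y i) : ℝ) : ℂ)) =
          (fun t : ℝ => (t : ℂ)) ∘ (K x) ∘ (fun y => y i) := rfl
      rw [this]
      exact Complex.measurable_ofReal.comp ((measurable_K_left x).comp (measurable_pi_apply i))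
    · exact ((continuous_extCM_snd g z).measurable.comp (measurable_pi_apply i)).pow_const _
  · exact Complex.measurable_ofReal.comp (measurable_pairProd d)

lemma norm_integrand_le {g : C(Sset, ℂ)} (hg : ‖g‖ ≤ 1) (q : ℕ) (d : ℕ) (z : ℂ) (x : ℝ × ℝ)
    (y : Fin d → ℝ × ℝ) : ‖integrand q (extCM g) d z x y‖ ≤ 1 := by
  unfold integrand
  rw [norm_mul, norm_pairProd, mul_one, norm_prod]
  apply Finset.prod_le_one (fun i _ => norm_nonneg _)
  intro i _
  exact norm_factor_le q _ (abs_K x (y i)) _ ((norm_extCM_le g z (y i)).trans hg)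

lemma integrable_integrand {g : C(Sset, ℂ)} (hg : ‖g‖ ≤ 1) (q : ℕ) (d : ℕ) (z : ℂ)
    (x : ℝ × ℝ) : Integrable (integrand q (extCM g) d z x) (μpi d) :=
  (integrable_const 1).mono' (aesm_integrand q g d z x)
    (Filter.Eventually.of_forall (norm_integrand_le hg q d z x))

lemma norm_Tterm_le {g : C(Sset, ℂ)} (hg : ‖g‖ ≤ 1) (q : ℕ) (z : ℂ) (x : ℝ × ℝ) (d : ℕ) :
    ‖Tterm q (extCM g) z x d‖ ≤ 1 / d.factorial := by
  rw [Tterm_eq_integral, norm_mul, norm_inv, Complex.norm_natCast]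
  have h := norm_integral_le_of_norm_le_const (μ := μpi d) (C := 1)
    (Filter.Eventually.of_forall (norm_integrand_le hg q d z x))
  rw [probReal_univ, mul_one] at h
  rw [one_div]
  calc (d.factorial : ℝ)⁻¹ * ‖∫ y, integrand q (extCM g) d z x y ∂(μpi d)‖
      ≤ (d.factorial : ℝ)⁻¹ * 1 := by
        apply mul_le_mul_of_nonneg_left h (by positivity)
    _ = (d.factorial : ℝ)⁻¹ := mul_one _

lemma norm_integrand_sub_le {g g' : C(Sset, ℂ)} (hg : ‖g‖ ≤ 1) (hg' : ‖g'‖ ≤ 1)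
    (q : ℕ) (d : ℕ) (z : ℂ) (x : ℝ × ℝ) {ε : ℝ}
    (hdiff : ∀ t, ‖extCM g z t - extCM g' z t‖ ≤ ε) (y : Fin d → ℝ × ℝ) :
    ‖integrand q (extCM g) d z x y - integrand q (extCM g') d z x y‖ ≤ d * ε := by
  unfold integrand
  rw [← sub_mul, norm_mul, norm_pairProd, mul_one]
  have h := norm_prod_sub_prod_le (Finset.univ : Finset (Fin d))
    (fun i => (K x (y i) : ℂ) * (extCM g z (y i)) ^ (q - 1) / ((q - 1).factorial : ℂ))
    (fun i => (K x (y i) : ℂ) * (extCM g' z (y i)) ^ (q - 1) / ((q - 1).factorial : ℂ))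
    (fun i _ => norm_factor_le q _ (abs_K x (y i)) _ ((norm_extCM_le g z (y i)).trans hg))
    (fun i _ => norm_factor_le q _ (abs_K x (y i)) _ ((norm_extCM_le g' z (y i)).trans hg'))
    (fun i _ => norm_factor_sub_le q _ (abs_K x (y i)) _ _
      ((norm_extCM_le g z (y i)).trans hg) ((norm_extCM_le g' z (y i)).trans hg')
      (hdiff (y i)))
  simpa using h

lemma norm_Tterm_sub_le {g g' : C(Sset, ℂ)} (hg : ‖g‖ ≤ 1) (hg' : ‖g'‖ ≤ 1)
    (q : ℕ) (z : ℂ) (x : ℝ × ℝ) (d : ℕ) {ε : ℝ}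
    (hdiff : ∀ t, ‖extCM g z t - extCM g' z t‖ ≤ ε) :
    ‖Tterm q (extCM g) z x d - Tterm q (extCM g') z x d‖ ≤ d * ε / d.factorial := by
  rw [Tterm_eq_integral, Tterm_eq_integral, ← mul_sub,
    ← integral_sub (integrable_integrand hg q d z x) (integrable_integrand hg' q d z x),
    norm_mul, norm_inv, Complex.norm_natCast]
  have h := norm_integral_le_of_norm_le_const (μ := μpi d) (C := d * ε)
    (Filter.Eventually.of_forall (norm_integrand_sub_le hg hg' q d z x hdiff))
  rw [probReal_univ, mul_one] at h
  have hfac : (0 : ℝ) < (d.factorial : ℝ) := by exact_mod_cast d.factorial_pos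
  calc (d.factorial : ℝ)⁻¹ *
      ‖∫ y, (integrand q (extCM g) d z x y - integrand q (extCM g') d z x y) ∂(μpi d)‖
      ≤ (d.factorial : ℝ)⁻¹ * (d * ε) := mul_le_mul_of_nonneg_left h (by positivity)
    _ = d * ε / d.factorial := by rw [div_eq_inv_mul]

lemma summable_Tterm {g : C(Sset, ℂ)} (hg : ‖g‖ ≤ 1) (q : ℕ) (z : ℂ) (x : ℝ × ℝ) :
    Summable (fun d : ℕ => Tterm q (extCM g) z x (d + 1)) :=
  Summable.of_norm_bounded summable_invfact_succ (fun d => norm_Tterm_le hg q z x (d + 1))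

lemma norm_tsum_Tterm_le {g : C(Sset, ℂ)} (hg : ‖g‖ ≤ 1) (q : ℕ) (z : ℂ) (x : ℝ × ℝ) :
    ‖∑' d : ℕ, Tterm q (extCM g) z x (d + 1)‖ ≤ 2 := by
  have hsn : Summable (fun d : ℕ => ‖Tterm q (extCM g) z x (d + 1)‖) :=
    Summable.of_nonneg_of_le (fun d => norm_nonneg _)
      (fun d => norm_Tterm_le hg q z x (d + 1)) summable_invfact_succ
  calc ‖∑' d : ℕ, Tterm q (extCM g) z x (d + 1)‖
      ≤ ∑' d : ℕ, ‖Tterm q (extCM g) z x (d + 1)‖ := norm_tsum_le_tsum_norm hsn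
    _ ≤ ∑' d : ℕ, (1 : ℝ) / (d + 1).factorial :=
        Summable.tsum_le_tsum (fun d => norm_Tterm_le hg q z x (d + 1)) hsn summable_invfact_succ
    _ ≤ 2 := tsum_invfact_succ_le

lemma norm_Tcal_le {g : C(Sset, ℂ)} (hg : ‖g‖ ≤ 1) (q : ℕ) {z : ℂ} (hz : z ∈ De)
    (x : ℝ × ℝ) : ‖Tcal q (extCM g) z x‖ ≤ 3 * Real.exp (-2) := by
  have hzn : ‖z‖ ≤ Real.exp (-2) := mem_closedBall_zero_iff.mp hz
  unfold Tcal
  calc ‖z + z * ∑' d : ℕ, Tterm q (extCM g) z x (d + 1)‖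
      ≤ ‖z‖ + ‖z‖ * ‖∑' d : ℕ, Tterm q (extCM g) z x (d + 1)‖ := by
        refine (norm_add_le _ _).trans ?_
        rw [norm_mul]
    _ ≤ ‖z‖ + ‖z‖ * 2 := by
        have := norm_tsum_Tterm_le hg q z x
        nlinarith [norm_nonneg z]
    _ = 3 * ‖z‖ := by ring
    _ ≤ 3 * Real.exp (-2) := by linarith

lemma norm_Tcal_sub_le {g g' : C(Sset, ℂ)} (hg : ‖g‖ ≤ 1) (hg' : ‖g'‖ ≤ 1)
    (q : ℕ) {z : ℂ} (hz : z ∈ De) (x : ℝ × ℝ) {ε : ℝ} (hε : 0 ≤ ε)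
    (hdiff : ∀ t, ‖extCM g z t - extCM g' z t‖ ≤ ε) :
    ‖Tcal q (extCM g) z x - Tcal q (extCM g') z x‖ ≤ 3 * Real.exp (-2) * ε := by
  have hzn : ‖z‖ ≤ Real.exp (-2) := mem_closedBall_zero_iff.mp hz
  have hdsub : ∀ d : ℕ, ‖Tterm q (extCM g) z x (d + 1) - Tterm q (extCM g') z x (d + 1)‖
      ≤ ε * (1 / d.factorial) := by
    intro d
    have h := norm_Tterm_sub_le hg hg' q z x (d + 1) hdiff
    have heq : ((d + 1 : ℕ) : ℝ) * ε / ((d + 1).factorial : ℝ) = ε * (1 / d.factorial) := by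
      rw [Nat.factorial_succ]
      have h1 : ((d : ℝ) + 1) ≠ 0 := by positivity
      have h2 : (d.factorial : ℝ) ≠ 0 := by
        exact_mod_cast d.factorial_ne_zero
      push_cast
      field_simp
    rw [← heq]
    exact_mod_cast h
  have hsum1 := summable_Tterm hg q z x
  have hsum2 := summable_Tterm hg' q z x
  have hdiffsum : Summable (fun d : ℕ =>
      Tterm q (extCM g) z x (d + 1) - Tterm q (extCM g') z x (d + 1)) := hsum1.sub hsum2
  have hsn : Summable (fun d : ℕ =>
      ‖Tterm q (extCM g) z x (d + 1) - Tterm q (extCM g') z x (d + 1)‖) :=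
    Summable.of_nonneg_of_le (fun d => norm_nonneg _) hdsub (summable_invfact.mul_left ε)
  have key : ‖∑' d : ℕ, Tterm q (extCM g) z x (d + 1)
      - ∑' d : ℕ, Tterm q (extCM g') z x (d + 1)‖ ≤ 3 * ε := by
    rw [← Summable.tsum_sub hsum1 hsum2]
    calc ‖∑' d : ℕ, (Tterm q (extCM g) z x (d + 1) - Tterm q (extCM g') z x (d + 1))‖
        ≤ ∑' d : ℕ, ‖Tterm q (extCM g) z x (d + 1) - Tterm q (extCM g') z x (d + 1)‖ :=
          norm_tsum_le_tsum_norm hsn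
      _ ≤ ∑' d : ℕ, ε * (1 / d.factorial) :=
          Summable.tsum_le_tsum hdsub hsn (summable_invfact.mul_left ε)
      _ = ε * ∑' d : ℕ, (1 : ℝ) / d.factorial := tsum_mul_left
      _ ≤ ε * 3 := by
          have := tsum_invfact_le
          have hts : 0 ≤ ∑' d : ℕ, (1 : ℝ) / d.factorial :=
            tsum_nonneg (fun d => by positivity)
          nlinarith
      _ = 3 * ε := by ring
  unfold Tcal
  have hsplit : z + z * ∑' d : ℕ, Tterm q (extCM g) z x (d + 1)
      - (z + z * ∑' d : ℕ, Tterm q (extCM g') z x (d + 1))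
      = z * (∑' d : ℕ, Tterm q (extCM g) z x (d + 1)
        - ∑' d : ℕ, Tterm q (extCM g') z x (d + 1)) := by ring
  rw [hsplit, norm_mul]
  calc ‖z‖ * ‖∑' d : ℕ, Tterm q (extCM g) z x (d + 1)
      - ∑' d : ℕ, Tterm q (extCM g') z x (d + 1)‖
      ≤ Real.exp (-2) * (3 * ε) := by
        apply mul_le_mul hzn key (norm_nonneg _) (Real.exp_pos _).le
    _ = 3 * Real.exp (-2) * ε := by ring

/-! ### Congruence lemmas -/

lemma Tterm_congr {G G' : ℂ → ℝ × ℝ → ℂ} {z : ℂ} (q : ℕ) (x : ℝ × ℝ) (d : ℕ)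
    (h : ∀ᵐ t ∂nu, G z t = G' z t) : Tterm q G z x d = Tterm q G' z x d := by
  rw [Tterm_eq_integral, Tterm_eq_integral]
  congr 1
  apply integral_congr_ae
  have hall : ∀ᵐ y ∂(μpi d), ∀ i, G z (y i) = G' z (y i) :=
    ae_all_iff.mpr fun i => ae_eval_nu i h
  filter_upwards [hall] with y hy
  unfold integrand
  congr 1
  exact Finset.prod_congr rfl fun i _ => by rw [hy i]

lemma Tcal_congr {G G' : ℂ → ℝ × ℝ → ℂ} {z : ℂ} (q : ℕ) (x : ℝ × ℝ)
    (h : ∀ᵐ t ∂nu, G z t = G' z t) : Tcal q G z x = Tcal q G' z x := by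
  unfold Tcal
  congr 1
  congr 1
  exact tsum_congr fun d => Tterm_congr q x (d + 1) h

/-! ### Continuity of the operator -/

lemma continuousOn_Tterm (q : ℕ) (g : C(Sset, ℂ)) (hg : ‖g‖ ≤ 1) (d : ℕ) :
    ContinuousOn (fun p : ℂ × (ℝ × ℝ) => Tterm q (extCM g) p.1 p.2 d) Sset := by
  intro p₀ hp₀
  have hint : Tendsto (fun p : ℂ × (ℝ × ℝ) => ∫ y, integrand q (extCM g) d p.1 p.2 y ∂(μpi d))
      (nhdsWithin p₀ Sset) (nhds (∫ y, integrand q (extCM g) d p₀.1 p₀.2 y ∂(μpi d))) := by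
    apply tendsto_integral_filter_of_dominated_convergence (bound := fun _ => (1 : ℝ))
    · exact Filter.Eventually.of_forall (fun p => aesm_integrand q g d p.1 p.2)
    · exact Filter.Eventually.of_forall (fun p =>
        Filter.Eventually.of_forall (norm_integrand_le hg q d p.1 p.2))
    · exact integrable_const 1
    · have hae : ∀ᵐ y ∂(μpi d), ∀ i, ((y i).1 ≠ p₀.2.1 ∧ (y i).1 ≠ p₀.2.2) ∧
          ((y i).2 ≠ p₀.2.1 ∧ (y i).2 ≠ p₀.2.2) :=
        ae_all_iff.mpr fun i => ae_eval_nu i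
          (((ae_nu_fst_ne p₀.2.1).and (ae_nu_fst_ne p₀.2.2)).and
            ((ae_nu_snd_ne p₀.2.1).and (ae_nu_snd_ne p₀.2.2)))
      filter_upwards [hae] with y hy
      unfold integrand
      apply Tendsto.mul_const
      apply tendsto_finset_prod
      intro i _
      apply Tendsto.div_const
      apply Tendsto.mul
      · obtain ⟨⟨hy1, hy2⟩, hy3, hy4⟩ := hy i
        have hev : ∀ᶠ x' in nhds p₀.2, K x' (y i) = K p₀.2 (y i) :=
          eventually_K_eq p₀.2 (y i) hy1 hy2 hy3 hy4
        have hev' : ∀ᶠ x' : ℝ × ℝ in nhds p₀.2,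
            ((K x' (y i) : ℝ) : ℂ) = ((K p₀.2 (y i) : ℝ) : ℂ) :=
          hev.mono fun x' h => by rw [h]
        have hev2 : ∀ᶠ p : ℂ × (ℝ × ℝ) in nhdsWithin p₀ Sset,
            ((K p.2 (y i) : ℝ) : ℂ) = ((K p₀.2 (y i) : ℝ) : ℂ) :=
          Filter.Eventually.filter_mono nhdsWithin_le_nhds
            ((continuous_snd.tendsto p₀).eventually hev')
        exact Filter.Tendsto.congr'
          (Filter.EventuallyEq.symm hev2) tendsto_const_nhds
      · apply Tendsto.pow
        have h1 : ContinuousWithinAt (fun z => extCM g z (y i)) De p₀.1 :=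
          (continuousOn_extCM_fst g (y i)) p₀.1 hp₀.1
        have h2 : Tendsto (fun p : ℂ × (ℝ × ℝ) => p.1) (nhdsWithin p₀ Sset)
            (nhdsWithin p₀.1 De) := by
          apply tendsto_nhdsWithin_of_tendsto_nhds_of_eventually_within
          · exact (continuous_fst.tendsto p₀).mono_left nhdsWithin_le_nhds
          · exact eventually_nhdsWithin_of_forall (fun p hp => hp.1)
        exact h1.tendsto.comp h2
  exact Filter.Tendsto.const_mul _ hint

lemma continuousOn_Tcal (q : ℕ) (g : C(Sset, ℂ)) (hg : ‖g‖ ≤ 1) :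
    ContinuousOn (fun p : ℂ × (ℝ × ℝ) => Tcal q (extCM g) p.1 p.2) Sset := by
  have hts : ContinuousOn
      (fun p : ℂ × (ℝ × ℝ) => ∑' d : ℕ, Tterm q (extCM g) p.1 p.2 (d + 1)) Sset :=
    continuousOn_tsum (fun d => continuousOn_Tterm q g hg (d + 1)) summable_invfact_succ
      (fun d p _ => norm_Tterm_le hg q p.1 p.2 (d + 1))
  exact (continuous_fst.continuousOn).add ((continuous_fst.continuousOn).mul hts)

/-! ### The fixed point setup -/

abbrev BallX : Set C(Sset, ℂ) := Metric.closedBall 0 1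

instance : CompleteSpace BallX := Metric.isClosed_closedBall.completeSpace_coe

instance : Nonempty BallX := ⟨⟨0, Metric.mem_closedBall_self zero_le_one⟩⟩

lemma norm_of_mem_BallX {g : C(Sset, ℂ)} (hg : g ∈ BallX) : ‖g‖ ≤ 1 :=
  mem_closedBall_zero_iff.mp hg

def Phi (q : ℕ) (g : BallX) : BallX :=
  ⟨⟨fun p : Sset => Tcal q (extCM g.1) p.1.1 p.1.2,
    by
      have h := (continuousOn_Tcal q g.1 (norm_of_mem_BallX g.2)).restrict
      exact h⟩,
    by
      rw [Metric.mem_closedBall, dist_zero_right]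
      rw [ContinuousMap.norm_le _ zero_le_one]
      intro p
      calc ‖Tcal q (extCM g.1) p.1.1 p.1.2‖ ≤ 3 * Real.exp (-2) :=
            norm_Tcal_le (norm_of_mem_BallX g.2) q p.2.1 p.1.2
        _ ≤ 1 := three_exp_neg_two_lt_one.le⟩

lemma Phi_apply (q : ℕ) (g : BallX) (p : Sset) :
    (Phi q g).1 p = Tcal q (extCM g.1) p.1.1 p.1.2 := rfl

lemma norm_extCM_sub_le (g g' : C(Sset, ℂ)) (z : ℂ) (t : ℝ × ℝ) :
    ‖extCM g z t - extCM g' z t‖ ≤ dist g g' := by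
  unfold extCM
  split
  · rw [← dist_eq_norm]
    exact ContinuousMap.dist_apply_le_dist _
  · simpa using dist_nonneg

def kappa : NNReal := ⟨3 * Real.exp (-2), by positivity⟩

lemma contracting_Phi (q : ℕ) : ContractingWith kappa (Phi q) := by
  constructor
  · rw [← NNReal.coe_lt_coe]
    exact three_exp_neg_two_lt_one
  · apply LipschitzWith.of_dist_le_mul
    intro g g'
    rw [Subtype.dist_eq]
    have hC : (0 : ℝ) ≤ (kappa : ℝ) * dist g g' := by positivity
    rw [ContinuousMap.dist_le hC]
    intro p
    rw [Phi_apply, Phi_apply, dist_eq_norm]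
    have hd : ∀ t, ‖extCM g.1 p.1.1 t - extCM g'.1 p.1.1 t‖ ≤ dist g.1 g'.1 :=
      fun t => norm_extCM_sub_le g.1 g'.1 p.1.1 t
    have h := norm_Tcal_sub_le (norm_of_mem_BallX g.2) (norm_of_mem_BallX g'.2) q
      p.2.1 p.1.2 dist_nonneg hd
    calc ‖Tcal q (extCM g.1) p.1.1 p.1.2 - Tcal q (extCM g'.1) p.1.1 p.1.2‖
        ≤ 3 * Real.exp (-2) * dist g.1 g'.1 := h
      _ = (kappa : ℝ) * dist g g' := by rw [Subtype.dist_eq]; rfl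

def gfix (q : ℕ) : BallX := ContractingWith.fixedPoint (Phi q) (contracting_Phi q)

lemma gfix_isFixedPt (q : ℕ) : Function.IsFixedPt (Phi q) (gfix q) :=
  ContractingWith.fixedPoint_isFixedPt (contracting_Phi q)

/-! ### Analyticity -/

abbrev ball0 : Set ℂ := Metric.ball (0 : ℂ) (Real.exp (-2))

lemma ball0_subset_De : ball0 ⊆ De := Metric.ball_subset_closedBall

/-- Generalized difference bound for the integrand (two functions, two points). -/
lemma norm_integrand_sub_le₂ {g g' : C(Sset, ℂ)} (hg : ‖g‖ ≤ 1) (hg' : ‖g'‖ ≤ 1)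
    (q : ℕ) (d : ℕ) (z z' : ℂ) (x : ℝ × ℝ) {ε : ℝ}
    (hdiff : ∀ t, ‖extCM g z t - extCM g' z' t‖ ≤ ε) (y : Fin d → ℝ × ℝ) :
    ‖integrand q (extCM g) d z x y - integrand q (extCM g') d z' x y‖ ≤ d * ε := by
  unfold integrand
  rw [← sub_mul, norm_mul, norm_pairProd, mul_one]
  have h := norm_prod_sub_prod_le (Finset.univ : Finset (Fin d))
    (fun i => (K x (y i) : ℂ) * (extCM g z (y i)) ^ (q - 1) / ((q - 1).factorial : ℂ))
    (fun i => (K x (y i) : ℂ) * (extCM g' z' (y i)) ^ (q - 1) / ((q - 1).factorial : ℂ))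
    (fun i _ => norm_factor_le q _ (abs_K x (y i)) _ ((norm_extCM_le g z (y i)).trans hg))
    (fun i _ => norm_factor_le q _ (abs_K x (y i)) _ ((norm_extCM_le g' z' (y i)).trans hg'))
    (fun i _ => norm_factor_sub_le q _ (abs_K x (y i)) _ _
      ((norm_extCM_le g z (y i)).trans hg) ((norm_extCM_le g' z' (y i)).trans hg')
      (hdiff (y i)))
  simpa using h

/-- Measurability of a pointwise derivative. -/
lemma aesm_deriv {α : Type*} [MeasurableSpace α] {μ : Measure α} {F : ℂ → α → ℂ}
    {F' : α → ℂ} {z₀ : ℂ} (hm : ∀ z : ℂ, AEStronglyMeasurable (F z) μ)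
    (hd : ∀ y, HasDerivAt (fun z => F z y) (F' y) z₀) : AEStronglyMeasurable F' μ := by
  set u : ℕ → ℂ := fun n => z₀ + ((n : ℂ) + 1)⁻¹ with hu_def
  have hne : ∀ n : ℕ, ((n : ℂ) + 1)⁻¹ ≠ 0 := fun n =>
    inv_ne_zero (Nat.cast_add_one_ne_zero n)
  have hu : Tendsto u atTop (nhdsWithin z₀ {z₀}ᶜ) := by
    rw [tendsto_nhdsWithin_iff]
    constructor
    · have h1 : Tendsto (fun n : ℕ => ((1 / ((n : ℝ) + 1) : ℝ) : ℂ)) atTop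
          (nhds ((0 : ℝ) : ℂ)) :=
        (Complex.continuous_ofReal.tendsto 0).comp tendsto_one_div_add_atTop_nhds_zero_nat
      have h2 : (fun n : ℕ => ((1 / ((n : ℝ) + 1) : ℝ) : ℂ)) = fun n : ℕ => ((n : ℂ) + 1)⁻¹ := by
        funext n
        push_cast
        rw [one_div]
      rw [h2] at h1
      have := (tendsto_const_nhds : Tendsto (fun _ : ℕ => z₀) atTop (nhds z₀)).add h1
      simpa using this
    · apply Filter.Eventually.of_forall
      intro n
      simp only [Set.mem_compl_iff, Set.mem_singleton_iff, hu_def]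
      intro hcontra
      exact hne n (by rwa [add_eq_left] at hcontra)
  have hmeas : ∀ n : ℕ, AEStronglyMeasurable
      (fun y => slope (fun z => F z y) z₀ (u n)) μ := by
    intro n
    have : (fun y => slope (fun z => F z y) z₀ (u n)) =
        fun y => (F (u n) y - F z₀ y) * (u n - z₀)⁻¹ := by
      funext y
      rw [slope_def_field, div_eq_mul_inv]
    rw [this]
    exact ((hm (u n)).sub (hm z₀)).mul aestronglyMeasurable_const
  apply aestronglyMeasurable_of_tendsto_ae atTop hmeas
  apply Filter.Eventually.of_forall
  intro y
  exact (hasDerivAt_iff_tendsto_slope.mp (hd y)).comp hu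

def Adiff (g : C(Sset, ℂ)) : Prop :=
  ∀ x : ℝ × ℝ, DifferentiableOn ℂ (fun z => extCM g z x) ball0

lemma diffOn_integrand {g : C(Sset, ℂ)} (hA : Adiff g) (q : ℕ) (d : ℕ) (x : ℝ × ℝ)
    (y : Fin d → ℝ × ℝ) :
    DifferentiableOn ℂ (fun z => integrand q (extCM g) d z x y) ball0 := by
  unfold integrand
  apply DifferentiableOn.mul_const
  apply DifferentiableOn.fun_finsetProd
  intro i _
  exact ((differentiableOn_const _).mul ((hA (y i)).pow _)).div_const _

lemma lipschitz_extCM {g : C(Sset, ℂ)} (hg : ‖g‖ ≤ 1) (hA : Adiff g) {z₀ : ℂ}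
    (hz₀ : z₀ ∈ ball0) :
    ∃ r > 0, Metric.ball z₀ r ⊆ ball0 ∧ ∃ M ≥ (0 : ℝ), ∀ t : ℝ × ℝ,
      ∀ z₁ ∈ Metric.ball z₀ r, ∀ z₂ ∈ Metric.ball z₀ r,
        ‖extCM g z₁ t - extCM g z₂ t‖ ≤ M * ‖z₁ - z₂‖ := by
  have hz : ‖z₀‖ < Real.exp (-2) := mem_ball_zero_iff.mp hz₀
  set r := (Real.exp (-2) - ‖z₀‖) / 2 with hr_def
  have hr : 0 < r := by
    rw [hr_def]
    linarith
  have hball : Metric.ball z₀ r ⊆ ball0 := by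
    intro w hw
    rw [Metric.mem_ball, dist_zero_right]
    have hd : ‖w - z₀‖ < r := by rwa [Metric.mem_ball, dist_eq_norm] at hw
    calc ‖w‖ = ‖z₀ + (w - z₀)‖ := by ring_nf
      _ ≤ ‖z₀‖ + ‖w - z₀‖ := norm_add_le _ _
      _ < ‖z₀‖ + r := by linarith
      _ ≤ Real.exp (-2) := by rw [hr_def]; linarith
  refine ⟨r, hr, hball, 1 / r, by positivity, ?_⟩
  intro t z₁ h₁ z₂ h₂
  have hderiv : ∀ w ∈ Metric.ball z₀ r, ‖deriv (fun z => extCM g z t) w‖ ≤ 1 / r := by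
    intro w hw
    have hwz : ‖w - z₀‖ < r := by rwa [Metric.mem_ball, dist_eq_norm] at hw
    have hsub : Metric.closedBall w r ⊆ ball0 := by
      intro v hv
      rw [Metric.mem_ball, dist_zero_right]
      have hvw : ‖v - w‖ ≤ r := by rwa [Metric.mem_closedBall, dist_eq_norm] at hv
      calc ‖v‖ = ‖z₀ + (w - z₀) + (v - w)‖ := by ring_nf
        _ ≤ ‖z₀ + (w - z₀)‖ + ‖v - w‖ := norm_add_le _ _
        _ ≤ ‖z₀‖ + ‖w - z₀‖ + ‖v - w‖ := by
            have := norm_add_le z₀ (w - z₀)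
            linarith
        _ < ‖z₀‖ + r + r := by linarith
        _ ≤ Real.exp (-2) := by rw [hr_def]; linarith
    have hdc : DiffContOnCl ℂ (fun z => extCM g z t) (Metric.ball w r) := by
      apply DifferentiableOn.diffContOnCl
      apply (hA t).mono
      rw [closure_ball w hr.ne']
      exact hsub
    have := Complex.norm_deriv_le_of_forall_mem_sphere_norm_le hr hdc
      (fun v _ => (norm_extCM_le g v t).trans hg)
    simpa using this
  have hcvx : Convex ℝ (Metric.ball z₀ r) := convex_ball z₀ r
  have := hcvx.norm_image_sub_le_of_norm_hasDerivWithin_le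
    (f := fun z => extCM g z t) (f' := fun w => deriv (fun z => extCM g z t) w)
    (fun w hw => (((hA t).differentiableAt
      (Metric.isOpen_ball.mem_nhds (hball hw))).hasDerivAt).hasDerivWithinAt)
    hderiv h₂ h₁
  exact this

lemma differentiableOn_integral_integrand {g : C(Sset, ℂ)} (hg : ‖g‖ ≤ 1) (hA : Adiff g)
    (q : ℕ) (d : ℕ) (x : ℝ × ℝ) :
    DifferentiableOn ℂ
      (fun z => ∫ y, integrand q (extCM g) d z x y ∂(μpi d)) ball0 := by
  intro z₀ hz₀
  obtain ⟨r, hr, hball, M, hM, hlip⟩ := lipschitz_extCM hg hA hz₀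
  have hdzy : ∀ y, HasDerivAt (fun z => integrand q (extCM g) d z x y)
      (deriv (fun z => integrand q (extCM g) d z x y) z₀) z₀ := fun y =>
    ((diffOn_integrand hA q d x y).differentiableAt
      (Metric.isOpen_ball.mem_nhds hz₀)).hasDerivAt
  have hFlip : ∀ y : Fin d → ℝ × ℝ, LipschitzOnWith (Real.nnabs (d * M))
      (fun z => integrand q (extCM g) d z x y) (Metric.ball z₀ r) := by
    intro y
    apply LipschitzOnWith.of_dist_le_mul
    intro z₁ h₁ z₂ h₂
    rw [dist_eq_norm, dist_eq_norm]
    have hdiffb : ∀ t, ‖extCM g z₁ t - extCM g z₂ t‖ ≤ M * ‖z₁ - z₂‖ :=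
      fun t => hlip t z₁ h₁ z₂ h₂
    calc ‖integrand q (extCM g) d z₁ x y - integrand q (extCM g) d z₂ x y‖
        ≤ d * (M * ‖z₁ - z₂‖) := norm_integrand_sub_le₂ hg hg q d z₁ z₂ x hdiffb y
      _ = (d * M) * ‖z₁ - z₂‖ := by ring
      _ ≤ (Real.nnabs (d * M) : ℝ) * ‖z₁ - z₂‖ := by
          have h1 : (d * M : ℝ) ≤ (Real.nnabs (d * M) : ℝ) := by
            rw [Real.coe_nnabs]
            exact le_abs_self _
          have h2 : (0 : ℝ) ≤ ‖z₁ - z₂‖ := norm_nonneg _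
          nlinarith
  have key := hasDerivAt_integral_of_dominated_loc_of_lip (μ := μpi d) (𝕜 := ℂ)
    (F := fun z y => integrand q (extCM g) d z x y)
    (F' := fun y => deriv (fun z => integrand q (extCM g) d z x y) z₀)
    (x₀ := z₀) (bound := fun _ => (d : ℝ) * M) (Metric.ball_mem_nhds z₀ hr)
    (Filter.Eventually.of_forall fun z => aesm_integrand q g d z x)
    (integrable_integrand hg q d z₀ x)
    (aesm_deriv (fun z => aesm_integrand q g d z x) hdzy)
    (Filter.Eventually.of_forall hFlip)
    (integrable_const _)
    (Filter.Eventually.of_forall hdzy)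
  exact key.2.differentiableAt.differentiableWithinAt

lemma differentiableOn_Tterm {g : C(Sset, ℂ)} (hg : ‖g‖ ≤ 1) (hA : Adiff g)
    (q : ℕ) (x : ℝ × ℝ) (d : ℕ) :
    DifferentiableOn ℂ (fun z => Tterm q (extCM g) z x d) ball0 := by
  simp only [Tterm_eq_integral]
  exact (differentiableOn_integral_integrand hg hA q d x).const_mul _

lemma differentiableOn_Tcal {g : C(Sset, ℂ)} (hg : ‖g‖ ≤ 1) (hA : Adiff g)
    (q : ℕ) (x : ℝ × ℝ) :
    DifferentiableOn ℂ (fun z => Tcal q (extCM g) z x) ball0 := by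
  unfold Tcal
  apply DifferentiableOn.add (differentiableOn_id)
  apply DifferentiableOn.mul (differentiableOn_id)
  exact Complex.differentiableOn_tsum_of_summable_norm summable_invfact_succ
    (fun d => differentiableOn_Tterm hg hA q x (d + 1)) Metric.isOpen_ball
    (fun d w _ => norm_Tterm_le hg q w x (d + 1))

lemma Adiff_zero : Adiff (0 : C(Sset, ℂ)) := by
  intro x
  apply (differentiableOn_const 0).congr
  intro z _
  unfold extCM
  split <;> simp

lemma Adiff_Phi (q : ℕ) (g : BallX) (hA : Adiff g.1) : Adiff (Phi q g).1 := by
  intro x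
  have heq : ∀ z ∈ ball0, extCM (Phi q g).1 z x = Tcal q (extCM g.1) z (clamp x) := by
    intro z hz
    rw [extCM_apply _ x (ball0_subset_De hz)]
    rfl
  exact (differentiableOn_Tcal (norm_of_mem_BallX g.2) hA q (clamp x)).congr heq

def startX : BallX := ⟨0, Metric.mem_closedBall_self zero_le_one⟩

lemma Adiff_iterate (q : ℕ) (n : ℕ) : Adiff (((Phi q)^[n]) startX).1 := by
  induction n with
  | zero => exact Adiff_zero
  | succ n ih =>
    rw [Function.iterate_succ_apply']
    exact Adiff_Phi q _ ih

lemma differentiableOn_H (q : ℕ) (x : ℝ × ℝ) :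
    DifferentiableOn ℂ (fun z => extCM (gfix q).1 z x) ball0 := by
  have htend : Tendsto (fun n => (Phi q)^[n] startX) atTop (nhds (gfix q)) :=
    (contracting_Phi q).tendsto_iterate_fixedPoint startX
  have huni : TendstoUniformlyOn (fun n z => extCM ((Phi q)^[n] startX).1 z x)
      (fun z => extCM (gfix q).1 z x) atTop ball0 := by
    rw [Metric.tendstoUniformlyOn_iff]
    intro ε hε
    obtain ⟨N, hN⟩ := (Metric.tendsto_atTop.mp htend) ε hε
    rw [Filter.eventually_atTop]
    refine ⟨N, fun n hn z _ => ?_⟩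
    calc dist (extCM (gfix q).1 z x) (extCM ((Phi q)^[n] startX).1 z x)
        ≤ dist (gfix q).1 ((Phi q)^[n] startX).1 := by
          rw [dist_eq_norm]
          exact norm_extCM_sub_le _ _ z x
      _ = dist ((Phi q)^[n] startX) (gfix q) := by
          rw [Subtype.dist_eq, dist_comm]
      _ < ε := hN n hn
  exact (huni.tendstoLocallyUniformlyOn).differentiableOn
    (Filter.Eventually.of_forall fun n => Adiff_iterate q n x) Metric.isOpen_ball

/-- There exists `H ∈ ℱ_{e,Ω}` solving the Chord-Cavity-Generator fixed
point equation; it is the unique such solution (two solutions agree on the domain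
`{|z| ≤ e⁻²} × Ω`), and for every `x ∈ Ω` the map `z ↦ H(z,x)` is analytic on the open
disk `{|z| < e⁻²}`. -/
theorem exists_unique_CCG (q : ℕ) (hq : Even q) (hq2 : 2 ≤ q) :
    ∃ H : ℂ → ℝ × ℝ → ℂ, IsCCG q H ∧
      (∀ H' : ℂ → ℝ × ℝ → ℂ, IsCCG q H' → ∀ z ∈ De, ∀ x ∈ Omega, H' z x = H z x) ∧
      (∀ x ∈ Omega, ∀ z : ℂ, ‖z‖ < Real.exp (-2) → AnalyticAt ℂ (fun w => H w x) z) := by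
  refine ⟨extCM (gfix q).1, ⟨⟨by exact continuousOn_extCM (gfix q).1, fun z hz x hx =>
      (norm_extCM_le _ z x).trans (norm_of_mem_BallX (gfix q).2)⟩, ?_⟩, ?_, ?_⟩
  · -- the fixed point equation
    intro z hz x hx
    have hfp : Phi q (gfix q) = gfix q := gfix_isFixedPt q
    calc extCM (gfix q).1 z x
        = (gfix q).1 ⟨(z, x), Set.mem_prod.mpr ⟨hz, hx⟩⟩ := extCM_eq_of_mem _ hz hx
      _ = (Phi q (gfix q)).1 ⟨(z, x), Set.mem_prod.mpr ⟨hz, hx⟩⟩ := by rw [hfp]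
      _ = Tcal q (extCM (gfix q).1) z x := rfl
  · -- uniqueness
    rintro H' ⟨⟨hcont, hbd⟩, hfeq⟩ z hz x hx
    set g' : C(Sset, ℂ) := ⟨fun p : Sset => H' p.1.1 p.1.2, by exact hcont.restrict⟩
      with hg'def
    have hg'mem : g' ∈ BallX := by
      rw [Metric.mem_closedBall, dist_zero_right, ContinuousMap.norm_le _ zero_le_one]
      intro p
      exact hbd p.1.1 p.2.1 p.1.2 p.2.2
    have hfix : Phi q (⟨g', hg'mem⟩ : BallX) = ⟨g', hg'mem⟩ := by
      apply Subtype.ext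
      apply ContinuousMap.ext
      intro p
      have hae : ∀ᵐ t ∂nu, extCM g' p.1.1 t = H' p.1.1 t := by
        filter_upwards [ae_nu_mem_Omega] with t ht
        rw [extCM_eq_of_mem g' p.2.1 ht]
        rfl
      show Tcal q (extCM g') p.1.1 p.1.2 = g' p
      rw [Tcal_congr q p.1.2 hae]
      exact (hfeq p.1.1 p.2.1 p.1.2 p.2.2).symm
    have huniq : (⟨g', hg'mem⟩ : BallX) = gfix q :=
      (contracting_Phi q).fixedPoint_unique hfix
    have hval : g' = (gfix q).1 := congrArg Subtype.val huniq
    have h1 : H' z x = g' ⟨(z, x), Set.mem_prod.mpr ⟨hz, hx⟩⟩ := rfl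
    rw [h1, hval, extCM_eq_of_mem _ hz hx]
  · -- analyticity
    intro x _ z hz
    have hz0 : z ∈ ball0 := mem_ball_zero_iff.mpr hz
    exact (differentiableOn_H q x).analyticAt (Metric.isOpen_ball.mem_nhds hz0)

end SYK
end
end

section
/- For every even integer q ≥ 2, every v ≥ q, and every Δ ≥ 1, the cardinality of ℋ_{v,Δ} satisfies |ℋ_{v,Δ}| ≤ (2e)^{v+Δ} · v^{v+Δ}. -/
open MeasureTheory Filter

noncomputable section

namespace SYK

attribute [local instance] Classical.propDecidable

/-- `r` describes a member of `ℋ_{v,Δ}`: a connected `q`-uniform multi-hypergraph on the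
vertex set `{1,…,v}` with even multiplicities and total multiplicity `2(v−1+Δ)/(q−1)`. -/
def IsMultiHG (q v Δ : ℕ) (r : Finset (Fin v) → ℕ) : Prop :=
  (∀ e, r e ≠ 0 → e.card = q) ∧ (∀ e, Even (r e)) ∧
    (∀ a b : Fin v,
      Relation.ReflTransGen (fun a b => ∃ e, r e ≠ 0 ∧ a ∈ e ∧ b ∈ e) a b) ∧
    (q - 1) * (∑ e, r e) = 2 * (v - 1 + Δ)

/-- The key natural-number inequality: `C(v,q) + N ≤ N * (2v)^(q-1)`. -/
lemma key_nat (q v N : ℕ) (hq2 : 2 ≤ q) (hv : q ≤ v) (hvN : v ≤ (q - 1) * N) :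
    Nat.choose v q + N ≤ N * (2 * v) ^ (q - 1) := by
  have hq1 : 1 ≤ q - 1 := by omega
  have hv2 : 2 ≤ v := le_trans hq2 hv
  -- abbreviations
  set M := Nat.choose v q with hM
  set A := v ^ (q - 1) with hA
  set B := (q - 1) * N with hB
  set P := (2 : ℕ) ^ (q - 1) with hP
  have hAv : v ≤ A := Nat.le_self_pow (by omega) v
  have hA2 : 2 ≤ A := le_trans hv2 hAv
  have hP2 : 2 ≤ P := by
    calc (2:ℕ) = 2 ^ 1 := by norm_num
    _ ≤ P := Nat.pow_le_pow_right (by norm_num) hq1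
  have hNB : N ≤ B := by
    calc N = 1 * N := (one_mul N).symm
    _ ≤ (q - 1) * N := Nat.mul_le_mul_right N hq1
  -- `2*(q-1) * M ≤ v * A`
  have hfac : 2 * (q - 1) ≤ q.factorial := by
    have h1 : q - 1 ≤ (q - 1).factorial := Nat.self_le_factorial _
    have h2 : q.factorial = q * (q - 1).factorial := by
      obtain ⟨k, rfl⟩ : ∃ k, q = k + 1 := ⟨q - 1, by omega⟩
      simp [Nat.factorial_succ]
    have : 2 * (q - 1) ≤ q * (q - 1).factorial :=
      Nat.mul_le_mul hq2 h1
    omega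
  have hMd : 2 * (q - 1) * M ≤ v * A := by
    have h1 : q.factorial * M ≤ v ^ q := by
      rw [hM, ← Nat.descFactorial_eq_factorial_mul_choose]
      exact Nat.descFactorial_le_pow v q
    have h2 : v ^ q = v * A := by
      rw [hA, ← pow_succ']
      congr 1
      omega
    calc 2 * (q - 1) * M ≤ q.factorial * M := Nat.mul_le_mul_right M hfac
    _ ≤ v ^ q := h1
    _ = v * A := h2
  have hMd2 : 2 * (q - 1) * M ≤ B * A := by
    calc 2 * (q - 1) * M ≤ v * A := hMd
    _ ≤ B * A := Nat.mul_le_mul_right A hvN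
  -- conclude: multiply target by `2*(q-1)`
  have hmain : 2 * (q - 1) * (M + N) ≤ 2 * (q - 1) * (N * ((2 * v) ^ (q - 1))) := by
    have h2v : (2 * v) ^ (q - 1) = P * A := by rw [hP, hA, mul_pow]
    rw [h2v]
    have hgoal : 2 * (q - 1) * (M + N) ≤ 2 * (B * (P * A)) := by
      have hL : 2 * (q - 1) * (M + N) = 2 * (q - 1) * M + 2 * B := by rw [hB]; ring
      rw [hL]
      have h1 : 2 * B ≤ B * A := by
        calc 2 * B = B * 2 := by ring
        _ ≤ B * A := Nat.mul_le_mul_left B hA2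
      have h2 : 2 * (q - 1) * M + 2 * B ≤ 2 * (B * A) := by omega
      have h3 : B * A ≤ B * (P * A) := by
        calc B * A = B * (1 * A) := by ring
        _ ≤ B * (P * A) := Nat.mul_le_mul_left B (Nat.mul_le_mul_right A (by omega))
      omega
    calc 2 * (q - 1) * (M + N) ≤ 2 * (B * (P * A)) := hgoal
    _ = 2 * (q - 1) * (N * (P * A)) := by rw [hB]; ring
  exact Nat.le_of_mul_le_mul_left hmain (by omega)

/-- `N^N ≤ e^N * N!` over the reals. -/
lemma pow_self_le_exp_mul_factorial (N : ℕ) :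
    (N : ℝ) ^ N ≤ Real.exp 1 ^ N * (N.factorial : ℝ) := by
  have hfac : (0 : ℝ) < (N.factorial : ℝ) := by exact_mod_cast N.factorial_pos
  have h1 : (N : ℝ) ^ N / (N.factorial : ℝ) ≤ Real.exp N := by
    have hsum := Real.sum_le_exp_of_nonneg (x := (N : ℝ)) (Nat.cast_nonneg N) (N + 1)
    have hterm : (N : ℝ) ^ N / (N.factorial : ℝ) ≤
        ∑ i ∈ Finset.range (N + 1), (N : ℝ) ^ i / (i.factorial : ℝ) := by
      exact Finset.single_le_sum (f := fun i => (N : ℝ) ^ i / (i.factorial : ℝ))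
        (fun i _ => by positivity) (Finset.self_mem_range_succ N)
    exact le_trans hterm hsum
  have h2 : Real.exp (N : ℝ) = Real.exp 1 ^ N := by
    rw [← Real.exp_nat_mul, mul_one]
  rw [div_le_iff₀ hfac] at h1
  calc (N : ℝ) ^ N ≤ Real.exp N * (N.factorial : ℝ) := h1
  _ = Real.exp 1 ^ N * (N.factorial : ℝ) := by rw [h2]

/-- The numeric bound: `C(C(v,q)+N-1, N) ≤ (2ev)^((q-1)N+1)`. -/
lemma numeric_bound (q v N : ℕ) (hq2 : 2 ≤ q) (hv : q ≤ v) (hvN : v ≤ (q - 1) * N) :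
    ((Nat.choose (Nat.choose v q + N - 1) N : ℕ) : ℝ)
      ≤ (2 * Real.exp 1 * v) ^ ((q - 1) * N + 1) := by
  have hv2 : 2 ≤ v := le_trans hq2 hv
  have hN1 : 1 ≤ N := by
    by_contra h
    have : N = 0 := by omega
    rw [this, Nat.mul_zero] at hvN
    omega
  have hNpos : (0 : ℝ) < N := by exact_mod_cast hN1
  have e1 : (1 : ℝ) ≤ Real.exp 1 := Real.one_le_exp (by norm_num)
  have hfacpos : (0 : ℝ) < (N.factorial : ℝ) := by exact_mod_cast N.factorial_pos
  set M := Nat.choose v q with hM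
  have hM1 : 1 ≤ M := Nat.choose_pos hv
  have hbase1 : (1 : ℝ) ≤ 2 * Real.exp 1 * v := by
    have hv1 : (1 : ℝ) ≤ (v : ℝ) := by exact_mod_cast le_trans (by norm_num) hv2
    nlinarith
  have hbase0 : (0 : ℝ) ≤ 2 * Real.exp 1 * v := le_trans zero_le_one hbase1
  -- step 1 : choose bound
  have h1 : ((Nat.choose (M + N - 1) N : ℕ) : ℝ) ≤ ((M : ℝ) + N) ^ N / (N.factorial : ℝ) := by
    have := Nat.choose_le_pow_div (α := ℝ) N (M + N - 1)
    refine le_trans this ?_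
    have hle : ((M + N - 1 : ℕ) : ℝ) ≤ (M : ℝ) + N := by
      have : (M + N - 1 : ℕ) ≤ M + N := by omega
      calc ((M + N - 1 : ℕ) : ℝ) ≤ ((M + N : ℕ) : ℝ) := by exact_mod_cast this
      _ = (M : ℝ) + N := by push_cast; ring
    gcongr
  -- step 2 : replace 1/N! by e^N/N^N
  have h2 : ((M : ℝ) + N) ^ N / (N.factorial : ℝ) ≤ (((M : ℝ) + N) * Real.exp 1 / N) ^ N := by
    have hXpos : (0 : ℝ) ≤ (M : ℝ) + N := by positivity
    rw [div_pow, mul_pow]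
    rw [div_le_div_iff₀ hfacpos (by positivity)]
    have hNN := pow_self_le_exp_mul_factorial N
    calc ((M : ℝ) + N) ^ N * (N : ℝ) ^ N
        ≤ ((M : ℝ) + N) ^ N * (Real.exp 1 ^ N * (N.factorial : ℝ)) := by
          apply mul_le_mul_of_nonneg_left hNN (by positivity)
    _ = ((M : ℝ) + N) ^ N * Real.exp 1 ^ N * (N.factorial : ℝ) := by ring
  -- step 3 : base bound
  have h3 : ((M : ℝ) + N) * Real.exp 1 / N ≤ (2 * Real.exp 1 * v) ^ (q - 1) := by
    rw [div_le_iff₀ hNpos]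
    have hkey : ((M : ℝ) + N) ≤ (N : ℝ) * (2 * v) ^ (q - 1) := by
      have := key_nat q v N hq2 hv hvN
      calc ((M : ℝ) + N) = ((M + N : ℕ) : ℝ) := by push_cast; ring
      _ ≤ ((N * (2 * v) ^ (q - 1) : ℕ) : ℝ) := by exact_mod_cast this
      _ = (N : ℝ) * (2 * v) ^ (q - 1) := by push_cast; ring
    have hexp : Real.exp 1 ≤ Real.exp 1 ^ (q - 1) :=
      le_self_pow₀ e1 (by omega)
    have hprod : ((M : ℝ) + N) * Real.exp 1
        ≤ ((N : ℝ) * (2 * v) ^ (q - 1)) * Real.exp 1 ^ (q - 1) := by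
      apply mul_le_mul hkey hexp (le_trans zero_le_one e1) (by positivity)
    calc ((M : ℝ) + N) * Real.exp 1
        ≤ ((N : ℝ) * (2 * v) ^ (q - 1)) * Real.exp 1 ^ (q - 1) := hprod
    _ = (2 * Real.exp 1 * v) ^ (q - 1) * N := by
        rw [mul_pow, mul_pow, mul_pow]; ring
  -- combine
  calc ((Nat.choose (M + N - 1) N : ℕ) : ℝ)
      ≤ ((M : ℝ) + N) ^ N / (N.factorial : ℝ) := h1
  _ ≤ (((M : ℝ) + N) * Real.exp 1 / N) ^ N := h2
  _ ≤ ((2 * Real.exp 1 * v) ^ (q - 1)) ^ N := by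
      apply pow_le_pow_left₀ (by positivity) h3
  _ = (2 * Real.exp 1 * v) ^ ((q - 1) * N) := by rw [← pow_mul]
  _ ≤ (2 * Real.exp 1 * v) ^ ((q - 1) * N + 1) := by
      apply pow_le_pow_right₀ hbase1 (Nat.le_succ _)

/-- The encoding multiset: each `q`-edge `a` appears with half its multiplicity. -/
def halfMultiset (q v B : ℕ) (r : Finset (Fin v) → Fin B) :
    Multiset {e : Finset (Fin v) // e.card = q} :=
  ∑ a : {e : Finset (Fin v) // e.card = q}, Multiset.replicate ((r a.1 : ℕ) / 2) a

lemma count_halfMultiset (q v B : ℕ) (r : Finset (Fin v) → Fin B)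
    (a : {e : Finset (Fin v) // e.card = q}) :
    Multiset.count a (halfMultiset q v B r) = (r a.1 : ℕ) / 2 := by
  rw [halfMultiset, Multiset.count_sum']
  simp [Multiset.count_replicate]

lemma card_halfMultiset (q v B : ℕ) (r : Finset (Fin v) → Fin B) :
    Multiset.card (halfMultiset q v B r)
      = ∑ a : {e : Finset (Fin v) // e.card = q}, (r a.1 : ℕ) / 2 := by
  rw [← Multiset.sum_count_eq_card (fun a _ => Finset.mem_univ a)]
  exact Finset.sum_congr rfl (fun a _ => count_halfMultiset q v B r a)

/-- `|ℋ_{v,Δ}| ≤ (2e)^{v+Δ} v^{v+Δ}` for `v ≥ q` and `Δ ≥ 1`.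
(Multi-hypergraphs are encoded by their multiplicity functions; since the total
multiplicity is at most `2(v−1+Δ)`, multiplicities take values in `Fin (2(v−1+Δ)+1)`.) -/
theorem card_multiHG_le (q : ℕ) (hq : Even q) (hq2 : 2 ≤ q) (v Δ : ℕ)
    (hv : q ≤ v) (hΔ : 1 ≤ Δ) :
    (((Finset.univ.filter
        (fun r : Finset (Fin v) → Fin (2 * (v - 1 + Δ) + 1) =>
          IsMultiHG q v Δ (fun e => (r e : ℕ)))).card : ℝ))
      ≤ (2 * Real.exp 1) ^ (v + Δ) * (v : ℝ) ^ (v + Δ) := by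
  classical
  have hv2 : 2 ≤ v := le_trans hq2 hv
  set t := v - 1 + Δ with ht
  set s := Finset.univ.filter
      (fun r : Finset (Fin v) → Fin (2 * t + 1) =>
        IsMultiHG q v Δ (fun e => (r e : ℕ))) with hs
  rcases Finset.eq_empty_or_nonempty s with hemp | ⟨r₀, hr₀⟩
  · rw [hemp]
    simp only [Finset.card_empty, Nat.cast_zero]
    positivity
  · -- extract the structure from the witness to get N
    have hr₀' : IsMultiHG q v Δ (fun e => (r₀ e : ℕ)) := (Finset.mem_filter.mp hr₀).2
    obtain ⟨h₀1, h₀2, _, h₀4⟩ := hr₀'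
    -- define half-sums
    have half_eq : ∀ r : Finset (Fin v) → Fin (2 * t + 1),
        (∀ e, Even ((r e : ℕ))) →
        (∑ e, ((r e : ℕ))) = 2 * (∑ e, ((r e : ℕ)) / 2) := by
      intro r hr
      rw [Finset.mul_sum]
      apply Finset.sum_congr rfl
      intro e _
      obtain ⟨k, hk⟩ := hr e
      omega
    set N := ∑ e, ((r₀ e : ℕ)) / 2 with hN
    have hsum₀ : (∑ e, ((r₀ e : ℕ))) = 2 * N := half_eq r₀ h₀2
    have h₀4' : 2 * ((q - 1) * N) = 2 * t := by
      rw [show 2 * ((q - 1) * N) = (q - 1) * (2 * N) from by ring, ← hsum₀]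
      exact h₀4
    have htN : (q - 1) * N = t := Nat.eq_of_mul_eq_mul_left (by norm_num) h₀4'
    -- every member has the same half-sum
    have hsum_eq : ∀ r : Finset (Fin v) → Fin (2 * t + 1), r ∈ s →
        (∑ e, ((r e : ℕ)) / 2) = N := by
      intro r hr
      obtain ⟨_, hr2, _, hr4⟩ := (Finset.mem_filter.mp hr).2
      have h1 : (∑ e, ((r e : ℕ))) = 2 * (∑ e, ((r e : ℕ)) / 2) := half_eq r hr2
      have h4' : 2 * ((q - 1) * (∑ e, ((r e : ℕ)) / 2)) = 2 * t := by
        rw [show 2 * ((q - 1) * (∑ e, ((r e : ℕ)) / 2)) = (q - 1) * (2 * (∑ e, ((r e : ℕ)) / 2))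
          from by ring, ← h1]
        exact hr4
      have h3 : (q - 1) * (∑ e, ((r e : ℕ)) / 2) = t :=
        Nat.eq_of_mul_eq_mul_left (by norm_num) h4'
      have hq1 : 0 < q - 1 := by omega
      exact Nat.eq_of_mul_eq_mul_left hq1 (h3.trans htN.symm)
    -- the half-sum restricted to q-edges
    have hsubsum : ∀ r : Finset (Fin v) → Fin (2 * t + 1), r ∈ s →
        (∑ a : {e : Finset (Fin v) // e.card = q}, ((r a.1 : ℕ)) / 2) = N := by
      intro r hr
      obtain ⟨hr1, _, _, _⟩ := (Finset.mem_filter.mp hr).2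
      have h1 : (∑ a : {e : Finset (Fin v) // e.card = q}, ((r a.1 : ℕ)) / 2)
          = ∑ e ∈ Finset.univ.filter (fun e : Finset (Fin v) => e.card = q),
              ((r e : ℕ)) / 2 :=
        (Finset.sum_subtype (Finset.univ.filter (fun e : Finset (Fin v) => e.card = q))
          (by intro e; simp) (fun e => ((r e : ℕ)) / 2)).symm
      have h2 : ∑ e ∈ Finset.univ.filter (fun e : Finset (Fin v) => e.card = q),
          ((r e : ℕ)) / 2 = ∑ e, ((r e : ℕ)) / 2 := by
        apply Finset.sum_filter_of_ne
        intro e _ hne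
        apply hr1
        intro h0
        have h0' : ((r e : ℕ)) = 0 := h0
        omega
      rw [h1, h2, hsum_eq r hr]
    -- define the injection into symmetric powers
    have hcard_le : s.card ≤ Fintype.card (Sym {e : Finset (Fin v) // e.card = q} N) := by
      rw [← Fintype.card_coe s]
      have hF : ∀ r : ↥s,
          Multiset.card (halfMultiset q v (2 * t + 1)
            (r : Finset (Fin v) → Fin (2 * t + 1))) = N := by
        intro r
        rw [card_halfMultiset]
        exact hsubsum _ r.2
      have hinj : Function.Injective (fun r : ↥s =>
          (⟨halfMultiset q v (2 * t + 1) (r : Finset (Fin v) → Fin (2 * t + 1)), hF r⟩ :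
              Sym {e : Finset (Fin v) // e.card = q} N)) := by
        intro r1 r2 hr12
        have hcount : ∀ a : {e : Finset (Fin v) // e.card = q},
            (((r1 : Finset (Fin v) → Fin (2 * t + 1)) a.1 : ℕ)) / 2
              = (((r2 : Finset (Fin v) → Fin (2 * t + 1)) a.1 : ℕ)) / 2 := by
          have hm : halfMultiset q v (2 * t + 1) (r1 : Finset (Fin v) → Fin (2 * t + 1))
              = halfMultiset q v (2 * t + 1) (r2 : Finset (Fin v) → Fin (2 * t + 1)) :=
            Subtype.ext_iff.mp hr12
          intro a
          have h := congrArg (Multiset.count a) hm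
          simpa only [count_halfMultiset] using h
        obtain ⟨h11, h12, _, _⟩ := (Finset.mem_filter.mp r1.2).2
        obtain ⟨h21, h22, _, _⟩ := (Finset.mem_filter.mp r2.2).2
        apply Subtype.ext
        funext e
        by_cases hc : e.card = q
        · have hce := hcount ⟨e, hc⟩
          have he1 : Even ((r1 : Finset (Fin v) → Fin (2 * t + 1)) e : ℕ) := h12 e
          have he2 : Even ((r2 : Finset (Fin v) → Fin (2 * t + 1)) e : ℕ) := h22 e
          obtain ⟨k1, hk1⟩ := he1
          obtain ⟨k2, hk2⟩ := he2
          have : ((r1 : Finset (Fin v) → Fin (2 * t + 1)) e : ℕ)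
              = ((r2 : Finset (Fin v) → Fin (2 * t + 1)) e : ℕ) := by
            simp only at hce
            omega
          exact Fin.ext this
        · have he1 : ((r1 : Finset (Fin v) → Fin (2 * t + 1)) e : ℕ) = 0 := by
            by_contra h
            exact hc (h11 e h)
          have he2 : ((r2 : Finset (Fin v) → Fin (2 * t + 1)) e : ℕ) = 0 := by
            by_contra h
            exact hc (h21 e h)
          apply Fin.ext
          rw [he1, he2]
      exact Fintype.card_le_of_injective _ hinj
    -- count symmetric powers
    have hsym : Fintype.card (Sym {e : Finset (Fin v) // e.card = q} N)
        = Nat.choose (Nat.choose v q + N - 1) N := by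
      rw [Sym.card_sym_eq_multichoose, Nat.multichoose_eq]
      have hcardE : Fintype.card {e : Finset (Fin v) // e.card = q} = Nat.choose v q := by
        rw [Fintype.card_finset_len, Fintype.card_fin]
      rw [hcardE]
    -- numeric conclusion
    have hvt : v ≤ (q - 1) * N := by rw [htN]; omega
    have hnum := numeric_bound q v N hq2 hv hvt
    have hfinal : ((s.card : ℕ) : ℝ) ≤ (2 * Real.exp 1 * v) ^ ((q - 1) * N + 1) := by
      calc ((s.card : ℕ) : ℝ)
          ≤ ((Fintype.card (Sym {e : Finset (Fin v) // e.card = q} N) : ℕ) : ℝ) := by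
            exact_mod_cast hcard_le
      _ = ((Nat.choose (Nat.choose v q + N - 1) N : ℕ) : ℝ) := by rw [hsym]
      _ ≤ (2 * Real.exp 1 * v) ^ ((q - 1) * N + 1) := hnum
    have hexp : (q - 1) * N + 1 = v + Δ := by rw [htN]; omega
    rw [hexp] at hfinal
    calc (s.card : ℝ) ≤ (2 * Real.exp 1 * v) ^ (v + Δ) := hfinal
    _ = (2 * Real.exp 1) ^ (v + Δ) * (v : ℝ) ^ (v + Δ) := by rw [mul_pow]

end SYK
end
end
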